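/- Let (C, [,], ∘) be a post-Lie algebra over a field k of characteristic 0 and let λ ∈ k with λ ≠ 0. Then there exist a Lie algebra L over k, a Rota–Baxter operator P : L → L of weight λ (i.e., [P(x),P(y)] = P([P(x),y] + [x,P(y)] + λ[x,y]) for all x, y ∈ L), and an injective linear map ι : C → L such that ι(x ∘ y) = [P(ι(x)), ι(y)] and ι([x, y]) = λ[ι(x), ι(y)] for all x, y ∈ C. -/

import Mathlib

/-!
The sub-adjacent bracket `{x, y} = x ∘ y - y ∘ x + [x, y]` makes `C` into a Lie algebra `C̃`
acting on `(C, [,])` by the derivations `x ∘ -`, and the identity map `C → C̃` is a relative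
Rota–Baxter operator of weight `1` for this action. On the semidirect sum `C ⋊ C̃` it therefore
yields the Rota–Baxter operator `Q (a, u) = (0, a - u)` of weight `1`, so `λ • Q` has weight `λ`,
and `ι = λ⁻¹ • inl` intertwines `∘` with `[λ • Q (ι -), ι -]` and `[,]` with `λ [ι -, ι -]`.
-/

universe u v w

open LieAlgebra LieAlgebra.SemiDirectSum

namespace ULift

variable {R : Type*} [CommRing R] {L : Type*} [LieRing L]

instance : Bracket (ULift.{w} L) (ULift.{w} L) := ⟨fun x y => ⟨⁅x.down, y.down⁆⟩⟩

instance : LieRing (ULift.{w} L) where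
  add_lie x y z := ULift.ext _ _ (add_lie x.down y.down z.down)
  lie_add x y z := ULift.ext _ _ (lie_add x.down y.down z.down)
  lie_self x := ULift.ext _ _ (lie_self x.down)
  leibniz_lie x y z := ULift.ext _ _ (leibniz_lie x.down y.down z.down)

instance [LieAlgebra R L] : LieAlgebra R (ULift.{w} L) where
  lie_smul t x y := ULift.ext _ _ (lie_smul t x.down y.down)

def lieEquiv [LieAlgebra R L] : ULift.{w} L ≃ₗ⁅R⁆ L :=
  { ULift.moduleEquiv with map_lie' := rfl }

end ULift

section RotaBaxter

variable {R : Type*} [CommRing R] {L : Type*} [LieRing L] [LieAlgebra R L]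

def IsRotaBaxter (lam : R) (P : L →ₗ[R] L) : Prop :=
  ∀ x y : L, ⁅P x, P y⁆ = P (⁅P x, y⁆ + ⁅x, P y⁆ + lam • ⁅x, y⁆)

theorem IsRotaBaxter.smul {P : L →ₗ[R] L} (hP : IsRotaBaxter 1 P) (lam : R) :
    IsRotaBaxter lam (lam • P) := by
  intro x y
  simp only [LinearMap.smul_apply, smul_lie, lie_smul, hP x y, one_smul, ← smul_add, map_smul]

theorem IsRotaBaxter.conj {L' : Type*} [LieRing L'] [LieAlgebra R L'] {lam : R}
    {P : L →ₗ[R] L} (hP : IsRotaBaxter lam P) (e : L ≃ₗ⁅R⁆ L') :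
    IsRotaBaxter lam (e.toLinearEquiv.conj P) := by
  intro x y
  obtain ⟨x, rfl⟩ := e.surjective x
  obtain ⟨y, rfl⟩ := e.surjective y
  change ⁅e (P (e.symm (e x))), e (P (e.symm (e y)))⁆ =
    e (P (e.symm (⁅e (P (e.symm (e x))), e y⁆ + ⁅e x, e (P (e.symm (e y)))⁆ + lam • ⁅e x, e y⁆)))
  simp only [LieEquiv.symm_apply_apply, ← LieEquiv.map_lie, ← map_smul, ← map_add, hP x y]

end RotaBaxter

namespace LieAlgebra.SemiDirectSum

variable {R : Type*} [CommRing R] {K : Type*} [LieRing K] [LieAlgebra R K]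
  {L : Type*} [LieRing L] [LieAlgebra R L] {ψ : L →ₗ⁅R⁆ LieDerivation R K K}

def rotaBaxterOp (T : K →ₗ[R] L) : (K ⋊⁅ψ⁆ L) →ₗ[R] (K ⋊⁅ψ⁆ L) :=
  (inr ψ).toLinearMap ∘ₗ (T ∘ₗ projl ψ - (projr ψ).toLinearMap)

/-- The hypothesis says that `T` is a relative Rota–Baxter operator (`𝒪`-operator) of weight `1`
with respect to `ψ`. -/
theorem isRotaBaxter_rotaBaxterOp {T : K →ₗ[R] L}
    (hT : ∀ a b : K, ⁅T a, T b⁆ = T (ψ (T a) b - ψ (T b) a + ⁅a, b⁆)) :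
    IsRotaBaxter 1 (rotaBaxterOp (ψ := ψ) T) := by
  rintro ⟨a, u⟩ ⟨b, v⟩
  simp only [rotaBaxterOp, LinearMap.coe_comp, LieHom.coe_toLinearMap, Function.comp_apply,
    LinearMap.sub_apply, projl_mk, projr_mk, inr_eq_mk, lie_eq_mk, add_eq_mk, sub_eq_mk,
    lie_self, map_sub, LieDerivation.coe_sub, Pi.sub_apply, map_zero, sub_self, add_zero,
    zero_eq_mk, lie_sub, sub_lie, hT, map_add, zero_lie, zero_add, sub_zero, lie_zero, one_smul,
    mk.injEq, true_and]
  abel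

end LieAlgebra.SemiDirectSum

class IsPostLie {R : Type*} [CommRing R] {C : Type*} [LieRing C] [LieAlgebra R C]
    (circ : C →ₗ[R] C →ₗ[R] C) : Prop where
  circ_circ_sub (x y z : C) :
    circ (circ x y) z - circ x (circ y z) - circ (circ y x) z + circ y (circ x z) = circ ⁅y, x⁆ z
  circ_lie (x y z : C) : circ x ⁅y, z⁆ = ⁅circ x y, z⁆ + ⁅y, circ x z⁆

def SubAdjacent {R : Type*} [CommRing R] {C : Type*} [LieRing C] [LieAlgebra R C]
    (_circ : C →ₗ[R] C →ₗ[R] C) : Type _ :=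
  C

namespace SubAdjacent

variable {R : Type*} [CommRing R] {C : Type*} [LieRing C] [LieAlgebra R C]
  (circ : C →ₗ[R] C →ₗ[R] C)

instance : AddCommGroup (SubAdjacent circ) := inferInstanceAs (AddCommGroup C)

instance : Module R (SubAdjacent circ) := inferInstanceAs (Module R C)

def of : C ≃ₗ[R] SubAdjacent circ := LinearEquiv.refl R C

instance : Bracket (SubAdjacent circ) (SubAdjacent circ) where
  bracket x y := of circ (circ ((of circ).symm x) ((of circ).symm y) -
    circ ((of circ).symm y) ((of circ).symm x) + ⁅(of circ).symm x, (of circ).symm y⁆)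

theorem lie_of (x y : C) : ⁅of circ x, of circ y⁆ = of circ (circ x y - circ y x + ⁅x, y⁆) :=
  rfl

variable [IsPostLie circ]

instance : LieRing (SubAdjacent circ) where
  add_lie x y z := by
    obtain ⟨x, rfl⟩ := (of circ).surjective x
    obtain ⟨y, rfl⟩ := (of circ).surjective y
    obtain ⟨z, rfl⟩ := (of circ).surjective z
    simp only [← map_add, lie_of]
    congr 1
    simp only [map_add, LinearMap.add_apply, add_lie]
    abel
  lie_add x y z := by
    obtain ⟨x, rfl⟩ := (of circ).surjective x
    obtain ⟨y, rfl⟩ := (of circ).surjective y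
    obtain ⟨z, rfl⟩ := (of circ).surjective z
    simp only [← map_add, lie_of]
    congr 1
    simp only [map_add, LinearMap.add_apply, lie_add]
    abel
  lie_self x := by
    obtain ⟨x, rfl⟩ := (of circ).surjective x
    simp only [lie_of, sub_self, lie_self, add_zero, map_zero]
  leibniz_lie x y z := by
    obtain ⟨x, rfl⟩ := (of circ).surjective x
    obtain ⟨y, rfl⟩ := (of circ).surjective y
    obtain ⟨z, rfl⟩ := (of circ).surjective z
    have h₁ := IsPostLie.circ_circ_sub (circ := circ)
    have h₂ := IsPostLie.circ_lie (circ := circ)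
    simp only [lie_of, ← map_add]
    congr 1
    simp only [map_add, map_sub, LinearMap.add_apply, LinearMap.sub_apply,
      lie_add, add_lie, lie_sub, sub_lie]
    linear_combination (norm := module) h₂ x y z + h₂ z x y - h₂ y x z + h₁ z y x + h₁ y x z
      - h₁ z x y + leibniz_lie x y z - lie_skew y (circ z x)

instance : LieAlgebra R (SubAdjacent circ) where
  lie_smul t x y := by
    obtain ⟨x, rfl⟩ := (of circ).surjective x
    obtain ⟨y, rfl⟩ := (of circ).surjective y
    simp only [← map_smul, lie_of]
    congr 1
    simp only [map_smul, LinearMap.smul_apply, lie_smul, smul_sub, smul_add]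

end SubAdjacent

namespace IsPostLie

variable {R : Type*} [CommRing R] {C : Type*} [LieRing C] [LieAlgebra R C]
  (circ : C →ₗ[R] C →ₗ[R] C) [IsPostLie circ]

def circDerivation (x : C) : LieDerivation R C C where
  toLinearMap := circ x
  leibniz' a b := by
    rw [circ_lie, ← lie_skew b]
    abel

def derivationHom : SubAdjacent circ →ₗ⁅R⁆ LieDerivation R C C where
  toFun x := circDerivation circ ((SubAdjacent.of circ).symm x)
  map_add' x y := by ext; simp [circDerivation]
  map_smul' t x := by ext; simp [circDerivation]
  map_lie' {x y} := by
    obtain ⟨x, rfl⟩ := (SubAdjacent.of circ).surjective x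
    obtain ⟨y, rfl⟩ := (SubAdjacent.of circ).surjective y
    ext z
    simp only [circDerivation, SubAdjacent.lie_of, LinearEquiv.symm_apply_apply, map_add, map_sub,
      LinearMap.add_apply, LinearMap.sub_apply, LieDerivation.lie_apply, LieDerivation.mk_coe]
    rw [← lie_skew x y, map_neg, LinearMap.neg_apply]
    linear_combination (norm := module) circ_circ_sub (circ := circ) x y z

@[simp]
theorem derivationHom_of_apply (x y : C) :
    derivationHom circ (SubAdjacent.of circ x) y = circ x y :=
  rfl

end IsPostLie

section Embedding

variable {R : Type*} [CommRing R] {C : Type*} [LieRing C] [LieAlgebra R C]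
  {L : Type*} [LieRing L] [LieAlgebra R L]

def IsRotaBaxterEmbedding (lam : R) (circ : C →ₗ[R] C →ₗ[R] C) (P : L →ₗ[R] L)
    (ι : C →ₗ[R] L) : Prop :=
  IsRotaBaxter lam P ∧ Function.Injective ι ∧ (∀ x y : C, ι (circ x y) = ⁅P (ι x), ι y⁆) ∧
    ∀ x y : C, ι ⁅x, y⁆ = lam • ⁅ι x, ι y⁆

theorem IsRotaBaxterEmbedding.map {lam : R} {circ : C →ₗ[R] C →ₗ[R] C} {P : L →ₗ[R] L}
    {ι : C →ₗ[R] L} (h : IsRotaBaxterEmbedding lam circ P ι) {L' : Type*} [LieRing L']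
    [LieAlgebra R L'] (e : L ≃ₗ⁅R⁆ L') :
    IsRotaBaxterEmbedding lam circ (e.toLinearEquiv.conj P) (e.toLinearEquiv.toLinearMap ∘ₗ ι) := by
  obtain ⟨hP, hι, hcirc, hlie⟩ := h
  refine ⟨hP.conj e, e.injective.comp hι, fun x y => ?_, fun x y => ?_⟩
  · change e (ι (circ x y)) = ⁅e (P (e.symm (e (ι x)))), e (ι y)⁆
    rw [hcirc, e.symm_apply_apply, LieEquiv.map_lie]
  · change e (ι ⁅x, y⁆) = lam • ⁅e (ι x), e (ι y)⁆
    rw [hlie, map_smul, LieEquiv.map_lie]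

end Embedding

theorem IsPostLie.isRotaBaxterEmbedding_semiDirectSum {k : Type*} [Field k] {C : Type*}
    [LieRing C] [LieAlgebra k C] (circ : C →ₗ[k] C →ₗ[k] C) [IsPostLie circ] {lam : k}
    (hlam : lam ≠ 0) :
    IsRotaBaxterEmbedding lam circ
      (lam • rotaBaxterOp (ψ := derivationHom circ) (SubAdjacent.of circ).toLinearMap)
      (lam⁻¹ • (inl (derivationHom circ)).toLinearMap) := by
  refine ⟨(isRotaBaxter_rotaBaxterOp fun a b => rfl).smul lam,
    (smul_right_injective _ (inv_ne_zero hlam)).comp (inl_injective _), fun x y => ?_,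
    fun x y => ?_⟩
  · simp [rotaBaxterOp, hlam]
  · simp [hlam]

theorem stmt13_general {k : Type u} [Field k]
    {C : Type v} [LieRing C] [LieAlgebra k C] (lam : k) (hlam : lam ≠ 0)
    (circ : C →ₗ[k] C →ₗ[k] C)
    (hpost1 : ∀ x y z : C,
      circ (circ x y) z - circ x (circ y z) - circ (circ y x) z + circ y (circ x z)
        = circ ⁅y, x⁆ z)
    (hpost2 : ∀ x y z : C, circ x ⁅y, z⁆ = ⁅circ x y, z⁆ + ⁅y, circ x z⁆) :
    ∃ (L : Type (max u v)) (_ : LieRing L) (_ : LieAlgebra k L)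
      (P : L →ₗ[k] L) (ι : C →ₗ[k] L),
      (∀ x y : L, ⁅P x, P y⁆ = P (⁅P x, y⁆ + ⁅x, P y⁆ + lam • ⁅x, y⁆)) ∧
      Function.Injective ι ∧
      (∀ x y : C, ι (circ x y) = ⁅P (ι x), ι y⁆) ∧
      (∀ x y : C, ι ⁅x, y⁆ = lam • ⁅ι x, ι y⁆) := by
  have : IsPostLie circ := ⟨hpost1, hpost2⟩
  exact ⟨ULift.{u} (C ⋊⁅IsPostLie.derivationHom circ⁆ SubAdjacent circ), _, _, _, _,
    (IsPostLie.isRotaBaxterEmbedding_semiDirectSum circ hlam).map ULift.lieEquiv.symm⟩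

theorem stmt13 {k : Type u} [Field k] [CharZero k]
    {C : Type v} [LieRing C] [LieAlgebra k C] (lam : k) (hlam : lam ≠ 0)
    (circ : C →ₗ[k] C →ₗ[k] C)
    (hpost1 : ∀ x y z : C,
      circ (circ x y) z - circ x (circ y z) - circ (circ y x) z + circ y (circ x z)
        = circ ⁅y, x⁆ z)
    (hpost2 : ∀ x y z : C, circ x ⁅y, z⁆ = ⁅circ x y, z⁆ + ⁅y, circ x z⁆) :
    ∃ (L : Type (max u v)) (_ : LieRing L) (_ : LieAlgebra k L)
      (P : L →ₗ[k] L) (ι : C →ₗ[k] L),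
      (∀ x y : L, ⁅P x, P y⁆ = P (⁅P x, y⁆ + ⁅x, P y⁆ + lam • ⁅x, y⁆)) ∧
      Function.Injective ι ∧
      (∀ x y : C, ι (circ x y) = ⁅P (ι x), ι y⁆) ∧
      (∀ x y : C, ι ⁅x, y⁆ = lam • ⁅ι x, ι y⁆) :=
  stmt13_general lam hlam circ hpost1 hpost2
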